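/- Suppose G is a data graph with δ distinct data values and n nodes, and S is a binary relation on the set of nodes. If there is a k-REM witness for a pair (v_p, v_q) in S, then there is a k-REM witness for (v_p, v_q) in S of length (number of blocks ↓r̄.a[c]) at most 2^{n²(δ+1)^k}. -/
import Mathlib


/-- A data path `d₀ a₀ d₁ a₁ … a_{m−1} d_m`: a first data value followed by a
list of (letter, data value) pairs. -/
structure DataPath (A D : Type) where
  head : D
  tail : List (A × D)

namespace DataPath

/-- The last data value of a data path. -/
def lastVal {A D : Type} (w : DataPath A D) : D :=
  ((w.tail.getLast?).map Prod.snd).getD w.head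

/-- Concatenation of data paths (meaningful when `w₁.lastVal = w₂.head`). -/
def comp {A D : Type} (w₁ w₂ : DataPath A D) : DataPath A D :=
  ⟨w₁.head, w₁.tail ++ w₂.tail⟩

/-- Apply a map on data values to all data values of a data path. -/
def dmap {A D : Type} (π : D → D) (w : DataPath A D) : DataPath A D :=
  ⟨π w.head, w.tail.map (fun p => (p.1, π p.2))⟩

end DataPath

/-- Conditions over `k` registers. -/
inductive Cond (k : ℕ) where
  | top : Cond k
  | eq : Fin k → Cond k
  | ne : Fin k → Cond k
  | conj : Cond k → Cond k → Cond k
  | disj : Cond k → Cond k → Cond k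
  | neg : Cond k → Cond k

/-- Satisfaction of a condition at data value `d` under assignment `τ`
(`none` is the empty register `⊥`, unequal to every data value). -/
def CondSat {D : Type} {k : ℕ} (d : D) (τ : Fin k → Option D) : Cond k → Prop
  | .top => True
  | .eq i => τ i = some d
  | .ne i => τ i ≠ some d
  | .conj c₁ c₂ => CondSat d τ c₁ ∧ CondSat d τ c₂
  | .disj c₁ c₂ => CondSat d τ c₁ ∨ CondSat d τ c₂
  | .neg c => ¬ CondSat d τ c

/-- Regular expressions with memory over alphabet `A` with `k` registers. -/
inductive REM (A : Type) (k : ℕ) where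
  | eps : REM A k
  | letter : A → REM A k
  | plus : REM A k → REM A k → REM A k
  | concat : REM A k → REM A k → REM A k
  | iter : REM A k → REM A k
  | test : REM A k → Cond k → REM A k
  | bind : List (Fin k) → REM A k → REM A k

/-- Store `d` in each of the registers in `rs`. -/
def updReg {D : Type} {k : ℕ} (σ : Fin k → Option D) (rs : List (Fin k)) (d : D) :
    Fin k → Option D :=
  fun i => if i ∈ rs then some d else σ i

/-- The satisfaction relation `(e, w, σ) ⊢ σ'` of REMs on data paths. -/
inductive REMSat {A D : Type} {k : ℕ} :
    REM A k → DataPath A D → (Fin k → Option D) → (Fin k → Option D) → Prop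
  | eps (d : D) (σ : Fin k → Option D) : REMSat .eps ⟨d, []⟩ σ σ
  | letter (a : A) (d₁ d₂ : D) (σ : Fin k → Option D) :
      REMSat (.letter a) ⟨d₁, [(a, d₂)]⟩ σ σ
  | plusL {e₁ e₂ w σ σ'} : REMSat e₁ w σ σ' → REMSat (.plus e₁ e₂) w σ σ'
  | plusR {e₁ e₂ w σ σ'} : REMSat e₂ w σ σ' → REMSat (.plus e₁ e₂) w σ σ'
  | concat {e₁ e₂ w₁ w₂ σ σ₁ σ'} : w₁.lastVal = w₂.head →
      REMSat e₁ w₁ σ σ₁ → REMSat e₂ w₂ σ₁ σ' →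
      REMSat (.concat e₁ e₂) (w₁.comp w₂) σ σ'
  | iterBase {e w σ σ'} : REMSat e w σ σ' → REMSat (.iter e) w σ σ'
  | iterStep {e w₁ w₂ σ σ₁ σ'} : w₁.lastVal = w₂.head →
      REMSat e w₁ σ σ₁ → REMSat (.iter e) w₂ σ₁ σ' →
      REMSat (.iter e) (w₁.comp w₂) σ σ'
  | test {e c w σ σ'} : REMSat e w σ σ' → CondSat w.lastVal σ' c →
      REMSat (.test e c) w σ σ'
  | bind {rs e w σ σ'} : REMSat e w (updReg σ rs w.head) σ' →
      REMSat (.bind rs e) w σ σ'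

/-- The language of a `k`-REM: data paths accepted starting from the empty
assignment `⊥^k`. -/
def REMLang {A D : Type} {k : ℕ} (e : REM A k) : Set (DataPath A D) :=
  {w | ∃ σ' : Fin k → Option D, REMSat e w (fun _ => none) σ'}

/-- Regular expressions with equality over alphabet `A`. -/
inductive REE (A : Type) where
  | eps : REE A
  | letter : A → REE A
  | plus : REE A → REE A → REE A
  | concat : REE A → REE A → REE A
  | iter : REE A → REE A
  | eqTest : REE A → REE A
  | neTest : REE A → REE A

/-- The language of data paths of an REE. -/
inductive REELang {A D : Type} : REE A → DataPath A D → Prop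
  | eps (d : D) : REELang .eps ⟨d, []⟩
  | letter (a : A) (d₁ d₂ : D) : REELang (.letter a) ⟨d₁, [(a, d₂)]⟩
  | plusL {e₁ e₂ w} : REELang e₁ w → REELang (.plus e₁ e₂) w
  | plusR {e₁ e₂ w} : REELang e₂ w → REELang (.plus e₁ e₂) w
  | concat {e₁ e₂ w₁ w₂} : w₁.lastVal = w₂.head →
      REELang e₁ w₁ → REELang e₂ w₂ → REELang (.concat e₁ e₂) (w₁.comp w₂)
  | iterBase {e w} : REELang e w → REELang (.iter e) w
  | iterStep {e w₁ w₂} : w₁.lastVal = w₂.head →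
      REELang e w₁ → REELang (.iter e) w₂ → REELang (.iter e) (w₁.comp w₂)
  | eqTest {e w} : REELang e w → w.head = w.lastVal → REELang (.eqTest e) w
  | neTest {e w} : REELang e w → w.head ≠ w.lastVal → REELang (.neTest e) w

/-- A data graph: labeled edges over node type `V` and data values on nodes. -/
structure DataGraph (V A D : Type) where
  E : Set (V × A × V)
  ρ : V → D

/-- `Connects G u w v`: the data path `w` connects node `u` to node `v` in `G`. -/
inductive Connects {V A D : Type} (G : DataGraph V A D) : V → DataPath A D → V → Prop
  | nil (u : V) : Connects G u ⟨G.ρ u, []⟩ u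
  | cons {u v x : V} {a : A} {t : List (A × D)} :
      (u, a, v) ∈ G.E → Connects G v ⟨G.ρ v, t⟩ x →
      Connects G u ⟨G.ρ u, (a, G.ρ v) :: t⟩ x

/-- A block `↓r̄.a[c]` of a basic REM. -/
abbrev Block (A : Type) (k : ℕ) := List (Fin k) × A × Cond k

/-- The REM `↓r̄.a[c]` corresponding to a block. -/
def blockREM {A : Type} {k : ℕ} (b : Block A k) : REM A k :=
  .bind b.1 (.test (.letter b.2.1) b.2.2)

/-- The basic `k`-REM `↓r̄₁.a₁[c₁] · … · ↓r̄_m.a_m[c_m]` given by a list of blocks. -/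
def basicREM {A : Type} {k : ℕ} : List (Block A k) → REM A k
  | [] => .eps
  | [b] => blockREM b
  | b :: bs => .concat (blockREM b) (basicREM bs)

/-- `e` is a `k`-REM witness for `(u, v)` in `S`: some data path in its language
connects `u` to `v`, and every data path in its language only connects pairs in `S`. -/
def IsWitness {V A D : Type} {k : ℕ} (G : DataGraph V A D) (S : Set (V × V))
    (u v : V) (bs : List (Block A k)) : Prop :=
  (∃ w : DataPath A D, w ∈ REMLang (basicREM bs) ∧ Connects G u w v) ∧
  (∀ (u' v' : V) (w : DataPath A D),
      w ∈ REMLang (basicREM bs) → Connects G u' w v' → (u', v') ∈ S)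

/-- A single transition of the `k`-assignment graph `T_G`, labeled by a block. -/
def AssignStep {V A D : Type} {k : ℕ} (G : DataGraph V A D) (b : Block A k)
    (s s' : V × (Fin k → Option D)) : Prop :=
  (s.1, b.2.1, s'.1) ∈ G.E ∧ s'.2 = updReg s.2 b.1 (G.ρ s.1) ∧
    CondSat (G.ρ s'.1) s'.2 b.2.2

/-- A run in the `k`-assignment graph `T_G` along the blocks of a basic `k`-REM. -/
inductive AssignRun {V A D : Type} {k : ℕ} (G : DataGraph V A D) :
    List (Block A k) → V × (Fin k → Option D) → V × (Fin k → Option D) → Prop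
  | nil (s : V × (Fin k → Option D)) : AssignRun G [] s s
  | cons {b bs s s' s''} : AssignStep G b s s' → AssignRun G bs s' s'' →
      AssignRun G (b :: bs) s s''

/-- The binary relation `S_e` defined by an REE `e` on a data graph `G`. -/
def REEEval {V A D : Type} (G : DataGraph V A D) (e : REE A) : Set (V × V) :=
  {p : V × V | ∃ w : DataPath A D, REELang e w ∧ Connects G p.1 w p.2}

/-- Composition of binary relations. -/
def relComp {V : Type} (S₁ S₂ : Set (V × V)) : Set (V × V) :=
  {p : V × V | ∃ z : V, (p.1, z) ∈ S₁ ∧ (z, p.2) ∈ S₂}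

/-- The `=`-restriction `S^=` of a relation. -/
def eqRes {V A D : Type} (G : DataGraph V A D) (S : Set (V × V)) : Set (V × V) :=
  {p ∈ S | G.ρ p.1 = G.ρ p.2}

/-- The `≠`-restriction `S^≠` of a relation. -/
def neRes {V A D : Type} (G : DataGraph V A D) (S : Set (V × V)) : Set (V × V) :=
  {p ∈ S | G.ρ p.1 ≠ G.ρ p.2}

/-- Membership in the closure of a set `B` of binary relations under `+` (union)
and `∘` (composition). -/
inductive InClosure {V : Type} (B : Set (Set (V × V))) : Set (V × V) → Prop
  | base {S} : S ∈ B → InClosure B S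
  | union {S₁ S₂} : InClosure B S₁ → InClosure B S₂ → InClosure B (S₁ ∪ S₂)
  | comp {S₁ S₂} : InClosure B S₁ → InClosure B S₂ → InClosure B (relComp S₁ S₂)

/-- The base set `B₀ = {S_ε} ∪ {S_a | a ∈ Σ}`. -/
def B0 {V A D : Type} (G : DataGraph V A D) : Set (Set (V × V)) :=
  {S | S = REEEval G .eps ∨ ∃ a : A, S = REEEval G (.letter a)}

/-- The levels `L_i` of binary relations on a data graph. -/
def Level {V A D : Type} (G : DataGraph V A D) : ℕ → Set (Set (V × V))
  | 0 => {S | InClosure (B0 G) S}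
  | i + 1 => {S | InClosure
      ((Level G i) ∪ (eqRes G '' (Level G i)) ∪ (neRes G '' (Level G i))) S}

/-- The identity relation (neutral element for composition). -/
def relId (V : Type) : Set (V × V) := {p : V × V | p.1 = p.2}

/-- `LabelConnects G u l v`: some path from `u` to `v` in `G` has label word `l`. -/
inductive LabelConnects {V A D : Type} (G : DataGraph V A D) : V → List A → V → Prop
  | nil (u : V) : LabelConnects G u [] u
  | cons {u v x : V} {a : A} {l : List A} :
      (u, a, v) ∈ G.E → LabelConnects G v l x → LabelConnects G u (a :: l) x

/-- `q` is reachable from `p` in `G`. -/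
def Reachable {V A D : Type} (G : DataGraph V A D) (p q : V) : Prop :=
  ∃ w : DataPath A D, Connects G p w q

/-- Data graph homomorphism: preserves labeled edges and, on reachable pairs,
preserves and reflects equality of data values. -/
def IsDGHom {V A D : Type} (G : DataGraph V A D) (h : V → V) : Prop :=
  (∀ (p q : V) (a : A), (p, a, q) ∈ G.E → (h p, a, h q) ∈ G.E) ∧
  (∀ p q : V, Reachable G p q → (G.ρ p = G.ρ q ↔ G.ρ (h p) = G.ρ (h q)))

/-- A conjunctive regular data path query of arity `r`:
`Ans(z̄) := ⋀_i x_i →[e_i] y_i` where each `e_i` is an REM. -/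
structure CRDPQ (A : Type) (r : ℕ) where
  nvars : ℕ
  m : ℕ
  src : Fin m → Fin nvars
  tgt : Fin m → Fin nvars
  nreg : Fin m → ℕ
  expr : (i : Fin m) → REM A (nreg i)
  out : Fin r → Fin nvars

/-- The answer `Q(G)` of a CRDPQ on a data graph. -/
def CRDPQEval {V A D : Type} {r : ℕ} (G : DataGraph V A D) (Q : CRDPQ A r) :
    Set (Fin r → V) :=
  {t | ∃ μ : Fin Q.nvars → V,
        (∀ i : Fin Q.m, ∃ w : DataPath A D,
            w ∈ REMLang (Q.expr i) ∧ Connects G (μ (Q.src i)) w (μ (Q.tgt i))) ∧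
        t = μ ∘ Q.out}

/-- `S` is definable by a union of conjunctive regular data path queries. -/
def UCRDPQDefinable {V A D : Type} {r : ℕ} (G : DataGraph V A D)
    (S : Set (Fin r → V)) : Prop :=
  ∃ Qs : List (CRDPQ A r), S = {t | ∃ Q ∈ Qs, t ∈ CRDPQEval G Q}


section SmallWitnessAux

variable {V A D : Type} {k : ℕ}

private lemma connects_head' {G : DataGraph V A D} {u v : V} {w : DataPath A D}
    (h : Connects G u w v) : w.head = G.ρ u := by
  cases h <;> rfl

private lemma lastVal_cons' (d d' : D) (a : A) (t : List (A × D)) :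
    (⟨d, (a, d') :: t⟩ : DataPath A D).lastVal = (⟨d', t⟩ : DataPath A D).lastVal := by
  cases t with
  | nil => rfl
  | cons x xs =>
    show (Option.map Prod.snd ((a, d') :: x :: xs).getLast?).getD d
        = (Option.map Prod.snd ((x :: xs)).getLast?).getD d'
    rw [List.getLast?_cons_cons]
    rcases h : (x :: xs).getLast? with - | p
    · simp [List.getLast?_isSome] at h
    · simp

private lemma lastVal_single' (d d' : D) (a : A) :
    (⟨d, [(a, d')]⟩ : DataPath A D).lastVal = d' := by
  rw [lastVal_cons']; rfl

private lemma connects_comp' {G : DataGraph V A D} {u x v : V} {w₁ w₂ : DataPath A D}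
    (h₁ : Connects G u w₁ x) (h₂ : Connects G x w₂ v) (hl : w₁.lastVal = w₂.head) :
    Connects G u (w₁.comp w₂) v := by
  induction h₁ generalizing v with
  | nil u =>
    have hh : G.ρ u = w₂.head := hl
    show Connects G u ⟨G.ρ u, [] ++ w₂.tail⟩ v
    rw [List.nil_append, hh]
    exact h₂
  | @cons u y x a t hE hrest ih =>
    rw [lastVal_cons'] at hl
    have := ih h₂ hl
    show Connects G u ⟨G.ρ u, (a, G.ρ y) :: (t ++ w₂.tail)⟩ v
    exact Connects.cons hE this

private lemma blockSat_inv' {b : Block A k} {w : DataPath A D} {σ σ' : Fin k → Option D}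
    (h : REMSat (blockREM b) w σ σ') :
    ∃ d₂ : D, w = ⟨w.head, [(b.2.1, d₂)]⟩ ∧ σ' = updReg σ b.1 w.head ∧
      CondSat d₂ σ' b.2.2 := by
  obtain ⟨rs, a, c⟩ := b
  cases h with
  | bind h =>
    cases h with
    | test h hc =>
      cases h with
      | letter a d₁ d₂ =>
        refine ⟨d₂, rfl, rfl, ?_⟩
        rwa [lastVal_single'] at hc

private lemma blockSat_intro' (b : Block A k) (d₁ d₂ : D) (σ : Fin k → Option D)
    (hc : CondSat d₂ (updReg σ b.1 d₁) b.2.2) :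
    REMSat (blockREM b) ⟨d₁, [(b.2.1, d₂)]⟩ σ (updReg σ b.1 d₁) := by
  refine REMSat.bind (REMSat.test (REMSat.letter _ _ _ _) ?_)
  rwa [lastVal_single']

private lemma basicSat_cons' {b : Block A k} {bs : List (Block A k)}
    {w₁ w₂ : DataPath A D} {σ σ₁ σ' : Fin k → Option D}
    (hl : w₁.lastVal = w₂.head)
    (h₁ : REMSat (blockREM b) w₁ σ σ₁) (h₂ : REMSat (basicREM bs) w₂ σ₁ σ') :
    REMSat (basicREM (b :: bs)) (w₁.comp w₂) σ σ' := by
  cases bs with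
  | nil =>
    cases h₂ with
    | eps d =>
      have hcomp : w₁.comp ⟨d, []⟩ = w₁ := by simp [DataPath.comp]
      rw [show basicREM [b] = blockREM b from rfl, hcomp]
      exact h₁
  | cons b' bs' => exact REMSat.concat hl h₁ h₂

private lemma basicSat_cons_inv' {b : Block A k} {bs : List (Block A k)}
    {w : DataPath A D} {σ σ' : Fin k → Option D}
    (h : REMSat (basicREM (b :: bs)) w σ σ') :
    ∃ w₁ w₂ σ₁, w = w₁.comp w₂ ∧ w₁.lastVal = w₂.head ∧
      REMSat (blockREM b) w₁ σ σ₁ ∧ REMSat (basicREM bs) w₂ σ₁ σ' := by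
  cases bs with
  | nil =>
    exact ⟨w, ⟨w.lastVal, []⟩, σ', by simp [DataPath.comp], rfl, h, REMSat.eps _ _⟩
  | cons b' bs' =>
    cases h with
    | concat hl h₁ h₂ => exact ⟨_, _, _, rfl, hl, h₁, h₂⟩

private lemma run_of_sat' (G : DataGraph V A D) :
    ∀ (bs : List (Block A k)) (u v : V) (w : DataPath A D) (σ σ' : Fin k → Option D),
      REMSat (basicREM bs) w σ σ' → Connects G u w v → AssignRun G bs (u, σ) (v, σ') := by
  intro bs
  induction bs with
  | nil =>
    intro u v w σ σ' hs hc
    cases hs with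
    | eps d =>
      cases hc with
      | nil => exact AssignRun.nil _
  | cons b bs ih =>
    intro u v w σ σ' hs hc
    obtain ⟨w₁, w₂, σ₁, rfl, hl, h₁, h₂⟩ := basicSat_cons_inv' hs
    obtain ⟨d₂, hw₁, hσ₁, hcond⟩ := blockSat_inv' h₁
    obtain ⟨d₁, t₁⟩ := w₁
    obtain ⟨-, rfl⟩ : d₁ = d₁ ∧ t₁ = [(b.2.1, d₂)] := by
      simpa [DataPath.mk.injEq] using hw₁
    rw [lastVal_single'] at hl
    have hc' : Connects G u ⟨d₁, (b.2.1, d₂) :: w₂.tail⟩ v := hc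
    cases hc' with
    | @cons _ y _ _ _ hE hrest =>
      have hw₂ : w₂ = ⟨G.ρ y, w₂.tail⟩ := by rw [hl]
      have hc₂ : Connects G y w₂ v := by rw [hw₂]; exact hrest
      refine AssignRun.cons (b := b) (s' := (y, σ₁)) ⟨hE, ?_, ?_⟩ (ih _ _ _ _ _ h₂ hc₂)
      · exact hσ₁
      · exact hcond

private lemma sat_of_run' (G : DataGraph V A D) :
    ∀ (bs : List (Block A k)) (u v : V) (σ σ' : Fin k → Option D),
      AssignRun G bs (u, σ) (v, σ') →
      ∃ w, REMSat (basicREM bs) w σ σ' ∧ Connects G u w v := by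
  intro bs
  induction bs with
  | nil =>
    intro u v σ σ' hr
    cases hr
    exact ⟨⟨G.ρ u, []⟩, REMSat.eps _ _, Connects.nil u⟩
  | cons b bs ih =>
    intro u v σ σ' hr
    cases hr with
    | cons hstep hrest =>
      rename_i s'
      obtain ⟨y, σ₁⟩ := s'
      obtain ⟨hE, hσ₁, hcond⟩ := hstep
      obtain ⟨w₂, hs₂, hc₂⟩ := ih y v σ₁ σ' hrest
      have hl : (⟨G.ρ u, [(b.2.1, G.ρ y)]⟩ : DataPath A D).lastVal = w₂.head := by
        rw [connects_head' hc₂, lastVal_single']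
      have hsat₁ : REMSat (blockREM b) ⟨G.ρ u, [(b.2.1, G.ρ y)]⟩ σ σ₁ := by
        have := blockSat_intro' b (G.ρ u) (G.ρ y) σ (by rw [← hσ₁]; exact hcond)
        rwa [← hσ₁] at this
      refine ⟨DataPath.comp ⟨G.ρ u, [(b.2.1, G.ρ y)]⟩ w₂,
        basicSat_cons' hl hsat₁ hs₂, connects_comp' ?_ hc₂ hl⟩
      exact Connects.cons hE (Connects.nil y)

private lemma run_append' (G : DataGraph V A D) (l₁ l₂ : List (Block A k)) :
    ∀ s s'', AssignRun G (l₁ ++ l₂) s s'' ↔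
      ∃ s', AssignRun G l₁ s s' ∧ AssignRun G l₂ s' s'' := by
  induction l₁ with
  | nil =>
    intro s s''
    constructor
    · intro h; exact ⟨s, AssignRun.nil s, h⟩
    · rintro ⟨s', h₁, h₂⟩; cases h₁; exact h₂
  | cons b l₁ ih =>
    intro s s''
    constructor
    · intro h
      cases h with
      | cons hstep hrest =>
        rename_i s₁
        obtain ⟨s', h₁, h₂⟩ := (ih s₁ s'').mp hrest
        exact ⟨s', AssignRun.cons hstep h₁, h₂⟩
    · rintro ⟨s', h₁, h₂⟩
      cases h₁ with
      | cons hstep hrest =>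
        rename_i s₁
        exact AssignRun.cons hstep ((ih s₁ s'').mpr ⟨s', hrest, h₂⟩)

/-- The set of (start node, reached state) pairs of runs over `bs`. -/
private def StateRel (G : DataGraph V A D) (bs : List (Block A k)) :
    Set (V × V × (Fin k → Option D)) :=
  {q | AssignRun G bs (q.1, fun _ => none) q.2}

/-- The relation on nodes defined by a basic REM via the assignment graph. -/
private def EndRel (G : DataGraph V A D) (bs : List (Block A k)) : Set (V × V) :=
  {p | ∃ σ' : Fin k → Option D, AssignRun G bs (p.1, fun _ => none) (p.2, σ')}

private lemma isWitness_iff' (G : DataGraph V A D) (S : Set (V × V)) (u v : V)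
    (bs : List (Block A k)) :
    IsWitness G S u v bs ↔ (u, v) ∈ EndRel G bs ∧ EndRel G bs ⊆ S := by
  constructor
  · rintro ⟨⟨w, ⟨σ', hsat⟩, hc⟩, h₂⟩
    refine ⟨⟨σ', run_of_sat' G bs u v w _ _ hsat hc⟩, ?_⟩
    rintro ⟨p, q⟩ ⟨σ', hrun⟩
    obtain ⟨w', hsat', hc'⟩ := sat_of_run' G bs p q _ _ hrun
    exact h₂ p q w' ⟨σ', hsat'⟩ hc'
  · rintro ⟨⟨σ', hrun⟩, hsub⟩
    obtain ⟨w, hsat, hc⟩ := sat_of_run' G bs u v _ _ hrun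
    refine ⟨⟨w, ⟨σ', hsat⟩, hc⟩, ?_⟩
    rintro p q w' ⟨σ'', hsat'⟩ hc'
    exact hsub ⟨σ'', run_of_sat' G bs p q w' _ _ hsat' hc'⟩

private def GoodA (G : DataGraph V A D) (σ : Fin k → Option D) : Prop :=
  ∀ i d, σ i = some d → d ∈ Set.range G.ρ

private lemma goodA_run' {G : DataGraph V A D} {bs : List (Block A k)}
    {s s' : V × (Fin k → Option D)} (h : AssignRun G bs s s') (hg : GoodA G s.2) :
    GoodA G s'.2 := by
  induction h with
  | nil => exact hg
  | @cons b bs s s' s'' hstep hrest ih =>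
    apply ih
    intro i d hd
    rw [hstep.2.1] at hd
    unfold updReg at hd
    split at hd
    · exact ⟨s.1, (Option.some.injEq _ _ ▸ hd : G.ρ s.1 = d)⟩
    · exact hg i d hd

private lemma stateRel_subset_range' (G : DataGraph V A D) (bs : List (Block A k)) :
    StateRel G bs ⊆ Set.range (fun q : V × V × (Fin k → Option ↥(Set.range G.ρ)) =>
      (q.1, q.2.1, fun i => (q.2.2 i).map Subtype.val)) := by
  rintro ⟨u, x, σ⟩ hq
  have hg : GoodA G σ :=
    goodA_run' (hq : AssignRun G bs (u, fun _ => none) (x, σ))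
      (fun i d hd => by simp at hd)
  have hex : ∀ i, ∃ o : Option ↥(Set.range G.ρ), o.map Subtype.val = σ i := by
    intro i
    cases h : σ i with
    | none => exact ⟨none, rfl⟩
    | some d => exact ⟨some ⟨d, hg i d h⟩, rfl⟩
  choose f hf using hex
  exact ⟨(u, x, f), congrArg (fun g => (u, x, g)) (funext hf)⟩

end SmallWitnessAux

/-- if there is a `k`-REM witness for `(v_p, v_q)` in `S`, then there
is one with at most `2^(n² (δ+1)^k)` blocks, where `n` is the number of nodes and
`δ` the number of distinct data values of `G`. -/
theorem small_witness_exists {V A D : Type}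
    [Fintype V] [Fintype A] [Countable D] [Infinite D]
    (G : DataGraph V A D) (S : Set (V × V)) (n δ k : ℕ)
    (hn : Fintype.card V = n) (hδ : (Set.range G.ρ).ncard = δ)
    (u v : V) (h : ∃ bs : List (Block A k), IsWitness G S u v bs) :
    ∃ bs : List (Block A k), IsWitness G S u v bs ∧
      bs.length ≤ 2 ^ (n ^ 2 * (δ + 1) ^ k) := by
  classical
  haveI : Finite ↥(Set.range G.ρ) := (Set.finite_range G.ρ).to_subtype
  set B : ℕ := 2 ^ (n ^ 2 * (δ + 1) ^ k) with hB
  set Φ : V × V × (Fin k → Option ↥(Set.range G.ρ)) → V × V × (Fin k → Option D) :=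
    fun q => (q.1, q.2.1, fun i => (q.2.2 i).map Subtype.val) with hΦ
  have hΦfin : (Set.range Φ).Finite := Set.finite_range Φ
  have hcard : hΦfin.toFinset.card ≤ n ^ 2 * (δ + 1) ^ k := by
    have h1 : hΦfin.toFinset.card = (Set.range Φ).ncard :=
      (Set.ncard_eq_toFinset_card _ hΦfin).symm
    have h2 : (Set.range Φ).ncard ≤
        Nat.card (V × V × (Fin k → Option ↥(Set.range G.ρ))) := by
      rw [← Nat.card_coe_set_eq]
      exact Finite.card_range_le Φ
    have h3 : Nat.card (V × V × (Fin k → Option ↥(Set.range G.ρ)))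
        = n ^ 2 * (δ + 1) ^ k := by
      rw [Nat.card_prod, Nat.card_prod, Nat.card_fun, Finite.card_option,
        Nat.card_coe_set_eq, hδ, Nat.card_eq_fintype_card (α := V), hn,
        Nat.card_eq_fintype_card (α := Fin k), Fintype.card_fin]
      ring
    omega
  have key : ∀ m : ℕ, ∀ bs : List (Block A k), bs.length ≤ m →
      ∃ bs' : List (Block A k), EndRel G bs' = EndRel G bs ∧ bs'.length ≤ B := by
    intro m
    induction m with
    | zero => intro bs hlen; exact ⟨bs, rfl, hlen.trans (Nat.zero_le B)⟩
    | succ m ih =>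
      intro bs hlen
      by_cases hle : bs.length ≤ B
      · exact ⟨bs, rfl, hle⟩
      push_neg at hle
      set M : ℕ := bs.length with hM
      have hfin : ∀ i : ℕ, (StateRel G (bs.take i)).Finite :=
        fun i => hΦfin.subset (stateRel_subset_range' G (bs.take i))
      set f : Fin (M + 1) → Finset (V × V × (Fin k → Option D)) :=
        fun i => (hfin i).toFinset with hf
      have hmaps : ∀ i ∈ (Finset.univ : Finset (Fin (M + 1))),
          f i ∈ hΦfin.toFinset.powerset := by
        intro i _
        rw [Finset.mem_powerset]
        exact Set.Finite.toFinset_subset_toFinset.mpr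
          (stateRel_subset_range' G (bs.take i))
      have hlt : hΦfin.toFinset.powerset.card <
          (Finset.univ : Finset (Fin (M + 1))).card := by
        rw [Finset.card_powerset, Finset.card_univ, Fintype.card_fin]
        have : 2 ^ hΦfin.toFinset.card ≤ B := by
          rw [hB]; exact Nat.pow_le_pow_right (by norm_num) hcard
        omega
      obtain ⟨i, -, j, -, hne, heq⟩ :=
        Finset.exists_ne_map_eq_of_card_lt_of_maps_to hlt hmaps
      have main : ∀ i j : Fin (M + 1), (i : ℕ) < (j : ℕ) →
          StateRel G (bs.take i) = StateRel G (bs.take j) →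
          ∃ bs' : List (Block A k), EndRel G bs' = EndRel G bs ∧ bs'.length ≤ B := by
        intro i j hij hSR
        set bs' : List (Block A k) := bs.take i ++ bs.drop j with hbs'
        have hsplit : bs.take (j : ℕ) ++ bs.drop (j : ℕ) = bs :=
          List.take_append_drop _ _
        have hEnd : EndRel G bs' = EndRel G bs := by
          ext ⟨p, q⟩
          constructor
          · rintro ⟨σ', hrun⟩
            obtain ⟨s', h₁, h₂⟩ := (run_append' G _ _ _ _).mp hrun
            have hmem : (p, s') ∈ StateRel G (bs.take j) := hSR ▸ h₁
            refine ⟨σ', ?_⟩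
            rw [← hsplit]
            exact (run_append' G _ _ _ _).mpr ⟨s', hmem, h₂⟩
          · rintro ⟨σ', hrun⟩
            rw [← hsplit] at hrun
            obtain ⟨s', h₁, h₂⟩ := (run_append' G _ _ _ _).mp hrun
            have hmem : (p, s') ∈ StateRel G (bs.take i) := hSR.symm ▸ h₁
            exact ⟨σ', (run_append' G _ _ _ _).mpr ⟨s', hmem, h₂⟩⟩
        have hjM : (j : ℕ) ≤ M := Nat.lt_succ_iff.mp j.isLt
        have hlen' : bs'.length ≤ m := by
          rw [hbs', List.length_append, List.length_take, List.length_drop, ← hM]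
          omega
        obtain ⟨bs'', h₁, h₂⟩ := ih bs' hlen'
        exact ⟨bs'', h₁.trans hEnd, h₂⟩
      have hSReq : f i = f j → StateRel G (bs.take i) = StateRel G (bs.take j) :=
        fun h => Set.Finite.toFinset_inj.mp h
      rcases hne.lt_or_gt with hij | hji
      · exact main i j hij (hSReq heq)
      · exact main j i hji ((hSReq heq).symm)
  obtain ⟨bs, hw⟩ := h
  obtain ⟨bs', hEq, hlen⟩ := key bs.length bs le_rfl
  refine ⟨bs', ?_, hlen⟩
  rw [isWitness_iff']
  rw [isWitness_iff'] at hw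
  rw [hEq]
  exact hw
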